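/- Let v ∈ P, let ω̃(v) ∈ Γ be the unique common solution (the unique simultaneous maximizer over Γ of g̃_v and of g̃_v^{(j)} for every j), and let G(v) ∈ (0,∞)^K be a strictly positive vector with ω̃(v)_{i,m} = G(v)_i / Σ_{i'∈S_m} G(v)_{i'} for all m and i ∈ S_m. Then for every j ∈ {1,…,L}, the restriction G^{(j)}(v) of G(v) to the coordinates in Q_j is an eigenvector of the matrix H^{(j)}(v) with eigenvalue 1/g̃_v^{(j)}(ω̃(v)); that is, H^{(j)}(v) G^{(j)}(v) = (1/g̃_v^{(j)}(ω̃(v))) G^{(j)}(v). (Lemma 14 of the paper.) -/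

import Mathlib

open Finset
open scoped Classical

namespace HetTS

noncomputable section

variable {K M : ℕ}

/-- Number of clients having access to arm `i`. -/
def Mi (S : Fin M → Finset (Fin K)) (i : Fin K) : ℕ :=
  (Finset.univ.filter fun m => i ∈ S m).card

/-- The mean reward `μ_i(v)` of arm `i`: average of the means of arm `i` across the clients
having access to it. -/
def armMean (S : Fin M → Finset (Fin K)) (v : Fin M → Fin K → ℝ) (i : Fin K) : ℝ :=
  (1 / (Mi S i : ℝ)) * ∑ m ∈ Finset.univ.filter (fun m => i ∈ S m), v m i

/-- Arm `i` is the (unique) best arm of client `m` under instance `v`. -/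
def isBest (S : Fin M → Finset (Fin K)) (v : Fin M → Fin K → ℝ) (m : Fin M) (i : Fin K) :
    Prop :=
  i ∈ S m ∧ ∀ j ∈ S m, j ≠ i → armMean S v j < armMean S v i

/-- The set `P` of problem instances having a unique best arm at each client. -/
def PSet (S : Fin M → Finset (Fin K)) : Set (Fin M → Fin K → ℝ) :=
  {v | ∀ m, ∃ i, isBest S v m i}

/-- The set of alternative instances `Alt(v)`: instances in `P` whose tuple of best arms
differs from that of `v`. -/
def AltSet (S : Fin M → Finset (Fin K)) (v : Fin M → Fin K → ℝ) :
    Set (Fin M → Fin K → ℝ) :=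
  {v' | v' ∈ PSet S ∧ ¬ ∀ (m : Fin M) (i : Fin K), isBest S v m i ↔ isBest S v' m i}

/-- The set `Γ` of allocations: families `(ω_{i,m})_{m, i ∈ S_m}` of nonnegative weights
summing to one for each client (represented as functions vanishing off the support). -/
def Gam (S : Fin M → Finset (Fin K)) : Set (Fin M → Fin K → ℝ) :=
  {ω | (∀ m, ∀ i ∈ S m, 0 ≤ ω m i) ∧ (∀ m, ∑ i ∈ S m, ω m i = 1) ∧
    ∀ m, ∀ i, i ∉ S m → ω m i = 0}

/-- `g_v(ω)`, the inner infimum over alternative instances. -/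
def gfun (S : Fin M → Finset (Fin K)) (v ω : Fin M → Fin K → ℝ) : ℝ :=
  sInf {x | ∃ v' ∈ AltSet S v,
    x = ∑ m : Fin M, ∑ i ∈ S m, ω m i * (v m i - v' m i) ^ 2 / 2}

/-- The gap `Δ_i(v)`. -/
def Delta (S : Fin M → Finset (Fin K)) (v : Fin M → Fin K → ℝ) (i : Fin K) : ℝ :=
  sInf {x | ∃ m : Fin M, i ∈ S m ∧
    x = |armMean S v i - sSup {y | ∃ j ∈ S m, j ≠ i ∧ y = armMean S v j}|}

/-- The denominator `(1/M_i²) ∑_{m : i ∈ S_m} 1/ω_{i,m}`. -/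
def armDenom (S : Fin M → Finset (Fin K)) (ω : Fin M → Fin K → ℝ) (i : Fin K) : ℝ :=
  (1 / (Mi S i : ℝ) ^ 2) * ∑ m ∈ Finset.univ.filter (fun m => i ∈ S m), 1 / ω m i

/-- The simplified objective `g̃_v(ω)`. -/
def gtilde (S : Fin M → Finset (Fin K)) (v ω : Fin M → Fin K → ℝ) : ℝ :=
  if ∃ m, ∃ i ∈ S m, ω m i = 0 then 0
  else sInf {x | ∃ i : Fin K, x = (Delta S v i) ^ 2 / 2 / armDenom S ω i}

/-- The relation `R` on arms: two arms are related if some client has access to both. -/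
def armRel (S : Fin M → Finset (Fin K)) (i₁ i₂ : Fin K) : Prop :=
  ∃ m, i₁ ∈ S m ∧ i₂ ∈ S m

/-- The equivalence class `Q` of arm `i` under the smallest equivalence relation
containing `R`. -/
def armClass (S : Fin M → Finset (Fin K)) (i : Fin K) : Set (Fin K) :=
  {i' | Relation.EqvGen (armRel S) i i'}

/-- Same equivalence class, as a `Finset`. -/
def classFinset (S : Fin M → Finset (Fin K)) (i : Fin K) : Finset (Fin K) :=
  Finset.univ.filter fun i' => Relation.EqvGen (armRel S) i i'

/-- The per-class objective `g̃_v^{(j)}(ω)` where `Q` is the `j`-th equivalence class. -/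
def gtildeC (S : Fin M → Finset (Fin K)) (v : Fin M → Fin K → ℝ) (Q : Set (Fin K))
    (ω : Fin M → Fin K → ℝ) : ℝ :=
  if ∃ m, ∃ i ∈ S m, i ∈ Q ∧ ω m i = 0 then 0
  else sInf {x | ∃ i ∈ Q, x = (Delta S v i) ^ 2 / armDenom S ω i}

/-- `ω` is a common solution: it simultaneously attains `max_{ω'∈Γ} g̃_v(ω')` and
`max_{ω'∈Γ} g̃_v^{(j)}(ω')` for every equivalence class `Q_j`. -/
def IsCommonSol (S : Fin M → Finset (Fin K)) (v ω : Fin M → Fin K → ℝ) : Prop :=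
  ω ∈ Gam S ∧ (∀ ω' ∈ Gam S, gtilde S v ω' ≤ gtilde S v ω) ∧
    ∀ i : Fin K, ∀ ω' ∈ Gam S,
      gtildeC S v (armClass S i) ω' ≤ gtildeC S v (armClass S i) ω

/-- The balanced condition. -/
def BalancedCond (S : Fin M → Finset (Fin K)) (ω : Fin M → Fin K → ℝ) : Prop :=
  ∀ m₁ m₂ : Fin M, ∀ i₁ i₂ : Fin K, i₁ ∈ S m₁ → i₂ ∈ S m₁ → i₁ ∈ S m₂ → i₂ ∈ S m₂ →
    ω m₁ i₁ / ω m₁ i₂ = ω m₂ i₁ / ω m₂ i₂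

/-- The pseudo-balanced condition for instance `v`. -/
def PseudoBalancedCond (S : Fin M → Finset (Fin K)) (v ω : Fin M → Fin K → ℝ) : Prop :=
  ∀ i₁ i₂ : Fin K, Relation.EqvGen (armRel S) i₁ i₂ →
    (Delta S v i₁) ^ 2 / armDenom S ω i₁ = (Delta S v i₂) ^ 2 / armDenom S ω i₂

/-- The matrix `H(v)` (restricted to a class it gives `H^{(j)}(v)`). -/
def Hmat (S : Fin M → Finset (Fin K)) (v : Fin M → Fin K → ℝ) (i₁ i₂ : Fin K) : ℝ :=
  (1 / ((Delta S v i₁) ^ 2 * (Mi S i₁ : ℝ) ^ 2)) *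
    ((Finset.univ.filter fun m => i₁ ∈ S m ∧ i₂ ∈ S m).card : ℝ)


section Aux

variable (S : Fin M → Finset (Fin K)) (v : Fin M → Fin K → ℝ)

/-- Total weight of a client under a positive arm vector. -/
def Tsum (g : Fin K → ℝ) (m : Fin M) : ℝ := ∑ j ∈ S m, g j

/-- `∑_{m ∋ i} Tsum g m`. -/
def Wsum (g : Fin K → ℝ) (i : Fin K) : ℝ :=
  ∑ m ∈ Finset.univ.filter (fun m => i ∈ S m), Tsum S g m

/-- The per-arm objective value of the allocation induced by `g`. -/
def ffun (g : Fin K → ℝ) (i : Fin K) : ℝ :=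
  Delta S v i ^ 2 * (Mi S i : ℝ) ^ 2 * g i / Wsum S g i

/-- The allocation induced by an arm vector `g`. -/
def omof (g : Fin K → ℝ) (m : Fin M) (i : Fin K) : ℝ :=
  if i ∈ S m then g i / Tsum S g m else 0

variable {S v}

lemma Mi_pos (hcov : ∀ i : Fin K, ∃ m, i ∈ S m) (i : Fin K) : 0 < Mi S i := by
  obtain ⟨m, hm⟩ := hcov i
  exact Finset.card_pos.mpr ⟨m, by simp [hm]⟩

lemma Tsum_pos (hS : ∀ m, 2 ≤ (S m).card) {g : Fin K → ℝ} (hg : ∀ i, 0 < g i) (m : Fin M) :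
    0 < Tsum S g m := by
  have hne : (S m).Nonempty := Finset.card_pos.mp (by have := hS m; omega)
  exact Finset.sum_pos (fun i _ => hg i) hne

lemma Wsum_pos (hS : ∀ m, 2 ≤ (S m).card) (hcov : ∀ i : Fin K, ∃ m, i ∈ S m)
    {g : Fin K → ℝ} (hg : ∀ i, 0 < g i) (i : Fin K) : 0 < Wsum S g i := by
  obtain ⟨m, hm⟩ := hcov i
  exact Finset.sum_pos (fun m _ => Tsum_pos hS hg m) ⟨m, by simp [hm]⟩

lemma delta_pos (hS : ∀ m, 2 ≤ (S m).card) (hcov : ∀ i : Fin K, ∃ m, i ∈ S m)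
    (hv : v ∈ PSet S) (i : Fin K) : 0 < Delta S v i := by
  set D : Set ℝ := {x | ∃ m : Fin M, i ∈ S m ∧
    x = |armMean S v i - sSup {y | ∃ j ∈ S m, j ≠ i ∧ y = armMean S v j}|} with hD
  have hfin : D.Finite := by
    apply Set.Finite.subset (Set.finite_range (fun m : Fin M =>
      |armMean S v i - sSup {y | ∃ j ∈ S m, j ≠ i ∧ y = armMean S v j}|))
    rintro x ⟨m, _, rfl⟩; exact ⟨m, rfl⟩
  have hne : D.Nonempty := by
    obtain ⟨m, hm⟩ := hcov i; exact ⟨_, m, hm, rfl⟩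
  have hmem : sInf D ∈ D := hne.csInf_mem hfin
  obtain ⟨m, him, hx⟩ := hmem
  have hD0 : Delta S v i = sInf D := rfl
  rw [hD0, hx]
  set E : Set ℝ := {y | ∃ j ∈ S m, j ≠ i ∧ y = armMean S v j} with hE
  have hEfin : E.Finite := by
    apply Set.Finite.subset (Set.finite_range (fun j : Fin K => armMean S v j))
    rintro x ⟨j, _, _, rfl⟩; exact ⟨j, rfl⟩
  have hEne : E.Nonempty := by
    obtain ⟨j, hj, hji⟩ := Finset.exists_mem_ne (s := S m)
      (by have := hS m; omega) i
    exact ⟨_, j, hj, hji, rfl⟩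
  have hEmem : sSup E ∈ E := hEne.csSup_mem hEfin
  obtain ⟨j₀, hj₀S, hj₀i, hj₀⟩ := hEmem
  obtain ⟨a, haS, hbest⟩ := hv m
  rw [abs_pos, sub_ne_zero]
  by_cases hia : i = a
  · subst hia
    rw [hj₀]
    exact (hbest j₀ hj₀S hj₀i).ne'
  · have hlt : armMean S v i < armMean S v a := hbest i him hia
    have hle : armMean S v a ≤ sSup E :=
      le_csSup hEfin.bddAbove ⟨a, haS, fun h => hia h.symm, rfl⟩
    exact ne_of_lt (lt_of_lt_of_le hlt hle)

lemma omof_pos (hS : ∀ m, 2 ≤ (S m).card) {g : Fin K → ℝ} (hg : ∀ i, 0 < g i)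
    (m : Fin M) {i : Fin K} (hi : i ∈ S m) : 0 < omof S g m i := by
  rw [omof, if_pos hi]
  exact div_pos (hg i) (Tsum_pos hS hg m)

lemma omof_mem_Gam (hS : ∀ m, 2 ≤ (S m).card) {g : Fin K → ℝ} (hg : ∀ i, 0 < g i) :
    omof S g ∈ Gam S := by
  refine ⟨fun m i hi => (omof_pos hS hg m hi).le, fun m => ?_, fun m i hi => by
    simp [omof, hi]⟩
  have hT := (Tsum_pos hS hg m).ne'
  rw [Finset.sum_congr rfl (fun i hi => by rw [omof, if_pos hi]), ← Finset.sum_div,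
    ← Tsum, div_self hT]

lemma mem_classFinset_self (i : Fin K) : i ∈ classFinset S i := by
  simp [classFinset, Relation.EqvGen.refl]

lemma mem_classFinset_iff {i j : Fin K} :
    j ∈ classFinset S i ↔ Relation.EqvGen (armRel S) i j := by
  simp [classFinset]

lemma classFinset_closed {i a b : Fin K} {m : Fin M} (ha : a ∈ classFinset S i)
    (haS : a ∈ S m) (hbS : b ∈ S m) : b ∈ classFinset S i := by
  rw [mem_classFinset_iff] at ha ⊢
  exact ha.trans _ _ _ (Relation.EqvGen.rel _ _ ⟨m, haS, hbS⟩)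

lemma exists_boundary {A : Finset (Fin K)} {i₀ : Fin K}
    {x : Fin K} (hx : x ∈ A) (hxC : x ∈ classFinset S i₀)
    {y : Fin K} (hy : y ∈ classFinset S i₀) (hyA : y ∉ A) :
    ∃ a ∈ A, ∃ m, a ∈ S m ∧ ∃ b ∈ S m, b ∉ A := by
  set Bd : Prop := ∃ a ∈ A, ∃ m, a ∈ S m ∧ ∃ b ∈ S m, b ∉ A with hBd
  have hxy : Relation.EqvGen (armRel S) x y :=
    (Relation.EqvGen.symm _ _ (mem_classFinset_iff.mp hxC)).trans _ _ _
      (mem_classFinset_iff.mp hy)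
  have key : ∀ p q : Fin K, Relation.EqvGen (armRel S) p q →
      ((p ∈ A → q ∈ A ∨ Bd) ∧ (q ∈ A → p ∈ A ∨ Bd)) := by
    intro p q h
    induction h with
    | rel p q hr =>
      obtain ⟨m, hp, hq⟩ := hr
      constructor
      · intro hpA
        by_cases hqA : q ∈ A
        · exact Or.inl hqA
        · exact Or.inr ⟨p, hpA, m, hp, q, hq, hqA⟩
      · intro hqA
        by_cases hpA : p ∈ A
        · exact Or.inl hpA
        · exact Or.inr ⟨q, hqA, m, hq, p, hp, hpA⟩
    | refl p => exact ⟨fun h => Or.inl h, fun h => Or.inl h⟩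
    | symm p q _ ih => exact ⟨ih.2, ih.1⟩
    | trans p q r _ _ ih1 ih2 =>
      constructor
      · intro hp
        rcases ih1.1 hp with hq | hb
        · exact ih2.1 hq
        · exact Or.inr hb
      · intro hr
        rcases ih2.2 hr with hq | hb
        · exact ih1.2 hq
        · exact Or.inr hb
  rcases (key x y hxy).1 hx with h | h
  · exact absurd h hyA
  · exact h

lemma armDenom_omof {g : Fin K → ℝ} (i : Fin K) :
    armDenom S (omof S g) i = Wsum S g i / ((Mi S i : ℝ) ^ 2 * g i) := by
  rw [armDenom, Wsum, Finset.sum_div]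
  rw [Finset.mul_sum]
  refine Finset.sum_congr rfl fun m hm => ?_
  have him : i ∈ S m := by simpa using hm
  rw [omof, if_pos him, one_div_div]
  ring

lemma gtildeC_omof (hS : ∀ m, 2 ≤ (S m).card) {g : Fin K → ℝ} (hg : ∀ i, 0 < g i)
    (i₀ : Fin K) :
    gtildeC S v (armClass S i₀) (omof S g) =
      (classFinset S i₀).inf' ⟨i₀, mem_classFinset_self i₀⟩ (ffun S v g) := by
  have hval : ∀ i, Delta S v i ^ 2 / armDenom S (omof S g) i = ffun S v g i := by
    intro i
    rw [armDenom_omof, div_div_eq_mul_div, ffun, mul_assoc]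
  rw [gtildeC, if_neg]
  · have hset : {x | ∃ i ∈ armClass S i₀, x = Delta S v i ^ 2 / armDenom S (omof S g) i}
        = {x | ∃ i ∈ classFinset S i₀, x = ffun S v g i} := by
      ext x
      constructor
      · rintro ⟨i, hi, rfl⟩
        exact ⟨i, mem_classFinset_iff.mpr hi, hval i⟩
      · rintro ⟨i, hi, rfl⟩
        exact ⟨i, mem_classFinset_iff.mp hi, (hval i).symm⟩
    rw [hset]
    have hfin : {x | ∃ i ∈ classFinset S i₀, x = ffun S v g i}.Finite := by
      apply Set.Finite.subset (Set.finite_range (ffun S v g))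
      rintro x ⟨i, _, rfl⟩; exact ⟨i, rfl⟩
    apply le_antisymm
    · obtain ⟨i₁, hi₁, hieq⟩ := Finset.exists_mem_eq_inf'
        (⟨i₀, mem_classFinset_self (S := S) i₀⟩ : (classFinset S i₀).Nonempty) (ffun S v g)
      rw [hieq]
      exact csInf_le hfin.bddBelow ⟨i₁, hi₁, rfl⟩
    · refine le_csInf ⟨ffun S v g i₀, i₀, mem_classFinset_self i₀, rfl⟩ ?_
      rintro x ⟨i, hi, rfl⟩
      exact Finset.inf'_le _ hi
  · rintro ⟨m, i, hiS, _, h0⟩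
    exact (omof_pos hS hg m hiS).ne' h0

lemma pseudo_balance (hS : ∀ m, 2 ≤ (S m).card) (hcov : ∀ i : Fin K, ∃ m, i ∈ S m)
    (hv : v ∈ PSet S) {G : Fin K → ℝ} (hGpos : ∀ i, 0 < G i) (i₀ : Fin K)
    (hopt : ∀ ω' ∈ Gam S, gtildeC S v (armClass S i₀) ω' ≤
      gtildeC S v (armClass S i₀) (omof S G)) :
    ∀ i ∈ classFinset S i₀,
      ffun S v G i = (classFinset S i₀).inf' ⟨i₀, mem_classFinset_self i₀⟩ (ffun S v G) := by
  set C := classFinset S i₀ with hCdef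
  have hC : C.Nonempty := ⟨i₀, mem_classFinset_self i₀⟩
  set c : ℝ := C.inf' hC (ffun S v G) with hc
  have hfpos : ∀ g : Fin K → ℝ, (∀ i, 0 < g i) → ∀ i, 0 < ffun S v g i := by
    intro g hg i
    refine div_pos (mul_pos (mul_pos (pow_pos (delta_pos hS hcov hv i) 2)
      (pow_pos ?_ 2)) (hg i)) (Wsum_pos hS hcov hg i)
    exact_mod_cast Mi_pos hcov i
  have hcpos : 0 < c := by
    obtain ⟨i₁, hi₁, hieq⟩ := Finset.exists_mem_eq_inf' hC (ffun S v G)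
    rw [hc, hieq]; exact hfpos G hGpos i₁
  have hopt' : ∀ g : Fin K → ℝ, (∀ i, 0 < g i) → C.inf' hC (ffun S v g) ≤ c := by
    intro g hg
    have h := hopt (omof S g) (omof_mem_Gam hS hg)
    rwa [gtildeC_omof hS hg i₀, gtildeC_omof hS hGpos i₀] at h
  have main : ∀ n : ℕ, ∀ g : Fin K → ℝ, (∀ i, 0 < g i) →
      C.inf' hC (ffun S v g) = c →
      (C.filter (fun i => ffun S v g i = c)).card ≤ n →
      C.filter (fun i => ffun S v g i = c) = C := by
    intro n
    induction n with
    | zero =>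
      intro g hg hmin hcard
      exfalso
      obtain ⟨i₁, hi₁, hieq⟩ := Finset.exists_mem_eq_inf' hC (ffun S v g)
      have hmem : i₁ ∈ C.filter (fun i => ffun S v g i = c) :=
        Finset.mem_filter.mpr ⟨hi₁, by rw [← hieq, hmin]⟩
      have := Finset.card_pos.mpr ⟨i₁, hmem⟩
      omega
    | succ n ih =>
      intro g hg hmin hcard
      set A := C.filter (fun i => ffun S v g i = c) with hA
      by_cases hAC : A = C
      · exact hAC
      exfalso
      have hAsub : A ⊆ C := Finset.filter_subset _ _
      have hge : ∀ i ∈ C, c ≤ ffun S v g i := by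
        intro i hi; rw [← hmin]; exact Finset.inf'_le _ hi
      obtain ⟨y, hyC, hyA⟩ : ∃ y ∈ C, y ∉ A := by
        by_contra h
        push_neg at h
        exact hAC (Finset.Subset.antisymm hAsub h)
      obtain ⟨i₁, hi₁, hieq⟩ := Finset.exists_mem_eq_inf' hC (ffun S v g)
      have hi₁A : i₁ ∈ A := Finset.mem_filter.mpr ⟨hi₁, by rw [← hieq, hmin]⟩
      obtain ⟨a, haA, m₀, ham₀, b, hbm₀, hbA⟩ :=
        exists_boundary hi₁A (hAsub hi₁A) hyC hyA
      have haC : a ∈ C := hAsub haA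
      have hCAne : (C \ A).Nonempty := ⟨y, Finset.mem_sdiff.mpr ⟨hyC, hyA⟩⟩
      have hgap : ∀ i ∈ C \ A, c < ffun S v g i := by
        intro i hi
        rcases Finset.mem_sdiff.mp hi with ⟨hiC, hiA⟩
        have hne : ffun S v g i ≠ c := fun h => hiA (Finset.mem_filter.mpr ⟨hiC, h⟩)
        exact lt_of_le_of_ne (hge i hiC) (Ne.symm hne)
      set δ : ℝ := (C \ A).inf' hCAne (fun i => ffun S v g i) - c with hδdef
      have hδpos : 0 < δ := by
        obtain ⟨i₂, hi₂, h2⟩ := Finset.exists_mem_eq_inf' hCAne (fun i => ffun S v g i)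
        have := hgap i₂ hi₂
        rw [hδdef, h2]; linarith
      have hδle : ∀ i ∈ C \ A, c + δ ≤ ffun S v g i := by
        intro i hi
        have h : (C \ A).inf' hCAne (fun i => ffun S v g i) ≤ ffun S v g i :=
          Finset.inf'_le _ hi
        rw [hδdef] at *
        linarith
      set t : ℝ := δ / (2 * c) with ht
      have htpos : 0 < t := div_pos hδpos (by linarith)
      have htc : t * c = δ / 2 := by
        rw [ht]; field_simp
      have h1t : (0:ℝ) < 1 + t := by linarith
      set g' : Fin K → ℝ := fun i => if i ∈ A then g i * (1 + t) else g i with hg'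
      have hg'pos : ∀ i, 0 < g' i := by
        intro i; rw [hg']; dsimp only
        split
        · exact mul_pos (hg i) h1t
        · exact hg i
      have hg'le : ∀ i, g i ≤ g' i := by
        intro i; rw [hg']; dsimp only
        split
        · nlinarith [hg i]
        · exact le_rfl
      have hg'le2 : ∀ i, g' i ≤ (1 + t) * g i := by
        intro i; rw [hg']; dsimp only
        split
        · nlinarith [hg i]
        · nlinarith [hg i]
      have hT1 : ∀ m, Tsum S g m ≤ Tsum S g' m :=
        fun m => Finset.sum_le_sum (fun i _ => hg'le i)
      have hT2 : ∀ m, Tsum S g' m ≤ (1 + t) * Tsum S g m := by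
        intro m; rw [Tsum, Tsum, Finset.mul_sum]
        exact Finset.sum_le_sum (fun i _ => hg'le2 i)
      have hT2s : Tsum S g' m₀ < (1 + t) * Tsum S g m₀ := by
        rw [Tsum, Tsum, Finset.mul_sum]
        refine Finset.sum_lt_sum (fun i _ => hg'le2 i) ⟨b, hbm₀, ?_⟩
        rw [hg']; dsimp only; rw [if_neg hbA]
        nlinarith [hg b]
      have hW2 : ∀ i, Wsum S g' i ≤ (1 + t) * Wsum S g i := by
        intro i; rw [Wsum, Wsum, Finset.mul_sum]
        exact Finset.sum_le_sum (fun m _ => hT2 m)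
      have hW2s : Wsum S g' a < (1 + t) * Wsum S g a := by
        rw [Wsum, Wsum, Finset.mul_sum]
        exact Finset.sum_lt_sum (fun m _ => hT2 m) ⟨m₀, by simp [ham₀], hT2s⟩
      have hNpos : ∀ i, 0 < Delta S v i ^ 2 * (Mi S i : ℝ) ^ 2 := by
        intro i
        refine mul_pos (pow_pos (delta_pos hS hcov hv i) 2) (pow_pos ?_ 2)
        exact_mod_cast Mi_pos hcov i
      have hfA : ∀ i ∈ A, c ≤ ffun S v g' i := by
        intro i hiA
        have hieq : ffun S v g i = c := (Finset.mem_filter.mp hiA).2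
        have hg'i : g' i = g i * (1 + t) := by
          rw [hg']; dsimp only; rw [if_pos hiA]
        rw [← hieq, ffun, ffun, hg'i]
        rw [div_le_div_iff₀ (Wsum_pos hS hcov hg i) (Wsum_pos hS hcov hg'pos i)]
        have h1 := hW2 i
        nlinarith [mul_le_mul_of_nonneg_left h1 (mul_pos (hNpos i) (hg i)).le]
      have hfa : c < ffun S v g' a := by
        have hieq : ffun S v g a = c := (Finset.mem_filter.mp haA).2
        have hg'a : g' a = g a * (1 + t) := by
          rw [hg']; dsimp only; rw [if_pos haA]
        rw [← hieq, ffun, ffun, hg'a]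
        rw [div_lt_div_iff₀ (Wsum_pos hS hcov hg a) (Wsum_pos hS hcov hg'pos a)]
        nlinarith [mul_lt_mul_of_pos_left hW2s (mul_pos (hNpos a) (hg a))]
      have hfCA : ∀ i ∈ C \ A, c < ffun S v g' i := by
        intro i hi
        rcases Finset.mem_sdiff.mp hi with ⟨hiC, hiA⟩
        have hg'i : g' i = g i := by
          rw [hg']; dsimp only; rw [if_neg hiA]
        have hWpos := Wsum_pos hS hcov hg i
        have hW'pos := Wsum_pos hS hcov hg'pos i
        have hNgi : (c + δ) * Wsum S g i ≤ Delta S v i ^ 2 * (Mi S i : ℝ) ^ 2 * g i := by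
          have h1 := hδle i hi
          rw [ffun, le_div_iff₀ hWpos] at h1
          linarith
        rw [ffun, hg'i, lt_div_iff₀ hW'pos]
        have h2 := hW2 i
        nlinarith [mul_le_mul_of_nonneg_left h2 hcpos.le]
      have hmin' : C.inf' hC (ffun S v g') = c := by
        apply le_antisymm (hopt' g' hg'pos)
        apply Finset.le_inf'
        intro i hi
        by_cases hiA : i ∈ A
        · exact hfA i hiA
        · exact (hfCA i (Finset.mem_sdiff.mpr ⟨hi, hiA⟩)).le
      have hsub' : C.filter (fun i => ffun S v g' i = c) ⊆ A.erase a := by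
        intro i hi
        rcases Finset.mem_filter.mp hi with ⟨hiC, hieq⟩
        have hiA : i ∈ A := by
          by_contra hiA
          exact (hfCA i (Finset.mem_sdiff.mpr ⟨hiC, hiA⟩)).ne' hieq
        refine Finset.mem_erase.mpr ⟨?_, hiA⟩
        rintro rfl
        exact hfa.ne' hieq
      have hcard' : (C.filter (fun i => ffun S v g' i = c)).card ≤ n := by
        have h1 := Finset.card_le_card hsub'
        have h2 : (A.erase a).card = A.card - 1 := Finset.card_erase_of_mem haA
        have h3 : 1 ≤ A.card := Finset.card_pos.mpr ⟨i₁, hi₁A⟩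
        omega
      have hres := ih g' hg'pos hmin' hcard'
      have hbC : b ∈ C := classFinset_closed haC ham₀ hbm₀
      rw [← hres] at hbC
      exact hbA (Finset.mem_of_mem_erase (hsub' hbC))
  intro i hi
  have hi' : i ∈ C := hi
  have hres := main C.card G hGpos hc.symm (Finset.card_filter_le _ _)
  rw [← hres] at hi'
  exact (Finset.mem_filter.mp hi').2

end Aux

/-- Lemma 14: for every class `Q_j`, the restriction of the global vector `G(v)` to `Q_j`
is an eigenvector of `H^(j)(v)` with eigenvalue `1/g̃_v^(j)(ω̃(v))`. -/
theorem stmt10 (K M : ℕ) (hK : 2 ≤ K) (hM : 1 ≤ M) (S : Fin M → Finset (Fin K))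
    (hS : ∀ m, 2 ≤ (S m).card) (hcov : ∀ i : Fin K, ∃ m, i ∈ S m)
    (v : Fin M → Fin K → ℝ) (hv : v ∈ PSet S)
    (ωt : Fin M → Fin K → ℝ) (hωt : IsCommonSol S v ωt)
    (G : Fin K → ℝ) (hGpos : ∀ i, 0 < G i)
    (hGω : ∀ m : Fin M, ∀ i ∈ S m, ωt m i = G i / ∑ i' ∈ S m, G i') :
    ∀ i : Fin K,
      ∑ i' ∈ classFinset S i, Hmat S v i i' * G i' =
        (1 / gtildeC S v (armClass S i) ωt) * G i := by
  intro i
  have hωeq : ωt = omof S G := by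
    funext m j
    by_cases hj : j ∈ S m
    · rw [hGω m j hj, omof, if_pos hj]; rfl
    · rw [hωt.1.2.2 m j hj, omof, if_neg hj]
  have hpb := pseudo_balance hS hcov hv hGpos i (by rw [← hωeq]; exact hωt.2.2 i)
  have hgt : gtildeC S v (armClass S i) ωt = ffun S v G i := by
    rw [hωeq, gtildeC_omof hS hGpos i, ← hpb i (mem_classFinset_self i)]
  rw [hgt]
  have hMpos : (0:ℝ) < (Mi S i : ℝ) := by exact_mod_cast Mi_pos hcov i
  have hΔ := delta_pos hS hcov hv i
  have hW := Wsum_pos hS hcov hGpos i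
  have hGi := hGpos i
  have hfilter : ∀ m, i ∈ S m → (classFinset S i).filter (fun j => j ∈ S m) = S m := by
    intro m him
    ext j
    simp only [Finset.mem_filter]
    exact ⟨fun h => h.2, fun hj => ⟨classFinset_closed (mem_classFinset_self i) him hj, hj⟩⟩
  have key : ∑ i' ∈ classFinset S i,
      ((Finset.univ.filter fun m => i ∈ S m ∧ i' ∈ S m).card : ℝ) * G i' = Wsum S G i := by
    calc ∑ i' ∈ classFinset S i,
        ((Finset.univ.filter fun m => i ∈ S m ∧ i' ∈ S m).card : ℝ) * G i'
        = ∑ i' ∈ classFinset S i, ∑ m ∈ Finset.univ.filter (fun m => i ∈ S m),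
            (if i' ∈ S m then G i' else 0) := by
          refine Finset.sum_congr rfl fun i' _ => ?_
          rw [← Finset.filter_filter, Finset.card_filter]
          push_cast
          rw [Finset.sum_mul]
          refine Finset.sum_congr rfl fun m _ => ?_
          rw [ite_mul, one_mul, zero_mul]
      _ = ∑ m ∈ Finset.univ.filter (fun m => i ∈ S m), ∑ i' ∈ classFinset S i,
            (if i' ∈ S m then G i' else 0) := Finset.sum_comm
      _ = ∑ m ∈ Finset.univ.filter (fun m => i ∈ S m), Tsum S G m := by
          refine Finset.sum_congr rfl fun m hm => ?_
          have him : i ∈ S m := by simpa using hm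
          rw [← Finset.sum_filter, hfilter m him]
          rfl
      _ = Wsum S G i := rfl
  calc ∑ i' ∈ classFinset S i, Hmat S v i i' * G i'
      = (1 / (Delta S v i ^ 2 * (Mi S i : ℝ) ^ 2)) * ∑ i' ∈ classFinset S i,
          ((Finset.univ.filter fun m => i ∈ S m ∧ i' ∈ S m).card : ℝ) * G i' := by
        rw [Finset.mul_sum]
        refine Finset.sum_congr rfl fun i' _ => ?_
        rw [Hmat]; ring
    _ = (1 / (Delta S v i ^ 2 * (Mi S i : ℝ) ^ 2)) * Wsum S G i := by rw [key]
    _ = (1 / ffun S v G i) * G i := by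
        rw [ffun, one_div_div]
        field_simp

end

end HetTS
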